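/- For complex numbers y, z with |y| < 1, |z| < 1: ∑ over pairs (a,b) with a ≥ 0, b ≥ 1, gcd(a,b) = 1 of (1/b)·log(1 − y^a z^b) equals (1/(1−y))·log(1−z). -/

import Mathlib

/-!
Expand `(1 - y)⁻¹ * log (1 - z) = ∑_{A ≥ 0, B ≥ 1} y ^ A * (-z ^ B / B)`, an absolutely convergent
double series. Every `(A, B)` with `B ≥ 1` is uniquely `(m * a, m * b)` with `gcd a b = 1` and
`m = gcd A B ≥ 1`, and for fixed `(a, b)` the terms indexed by `m` sum to
`(1 / b) * log (1 - y ^ a * z ^ b)`, again by the logarithm series.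
-/

open Complex

def coprimePairProdPosEquiv :
    {p : ℕ × ℕ // 0 < p.2 ∧ Nat.gcd p.1 p.2 = 1} × {m : ℕ // 0 < m} ≃ ℕ × {n : ℕ // 0 < n} where
  toFun x := (x.1.1.1 * x.2.1, ⟨x.1.1.2 * x.2.1, Nat.mul_pos x.1.2.1 x.2.2⟩)
  invFun q :=
    have hg : 0 < Nat.gcd q.1 q.2 := Nat.gcd_pos_of_pos_right _ q.2.2
    (⟨(q.1 / Nat.gcd q.1 q.2, q.2 / Nat.gcd q.1 q.2),
      Nat.div_pos (Nat.le_of_dvd q.2.2 (Nat.gcd_dvd_right _ _)) hg,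
      Nat.coprime_div_gcd_div_gcd hg⟩, ⟨Nat.gcd q.1 q.2, hg⟩)
  left_inv := by
    rintro ⟨⟨⟨a, b⟩, hb, hab⟩, ⟨m, hm⟩⟩
    have hg : Nat.gcd (a * m) (b * m) = m := by rw [Nat.gcd_mul_right, hab, one_mul]
    simp only [hg, Nat.mul_div_cancel _ hm]
  right_inv := by
    rintro ⟨A, B, hB⟩
    simp only [Nat.div_mul_cancel (Nat.gcd_dvd_left _ _),
      Nat.div_mul_cancel (Nat.gcd_dvd_right _ _)]

theorem hasSum_neg_pow_div_log_one_sub {w : ℂ} (hw : ‖w‖ < 1) :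
    HasSum (fun m : {m : ℕ // 0 < m} => -(w ^ (m : ℕ) / m)) (log (1 - w)) := by
  have hsupp : Function.support (fun m : ℕ => -(w ^ m / m)) ⊆ {m | 0 < m} := by
    intro m hm
    exact Nat.pos_of_ne_zero fun h => hm (by simp [h])
  have hlog : HasSum (fun m : ℕ => -(w ^ m / m)) (log (1 - w)) := by
    simpa using (hasSum_taylorSeries_neg_log hw).neg
  exact (hasSum_subtype_iff_of_support_subset hsupp).mpr hlog

theorem summable_norm_neg_pow_div {w : ℂ} (hw : ‖w‖ < 1) :
    Summable (fun m : {m : ℕ // 0 < m} => ‖-(w ^ (m : ℕ) / m)‖) := by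
  refine Summable.of_nonneg_of_le (fun _ => norm_nonneg _) (fun m => ?_)
    ((summable_geometric_of_lt_one (norm_nonneg w) hw).subtype _)
  rw [norm_neg, norm_div, norm_pow, norm_natCast]
  exact div_le_self (by positivity) (by exact_mod_cast m.2)

theorem hasSum_geometric_mul_neg_pow_div {y z : ℂ} (hy : ‖y‖ < 1) (hz : ‖z‖ < 1) :
    HasSum (fun q : ℕ × {n : ℕ // 0 < n} => y ^ q.1 * -(z ^ (q.2 : ℕ) / q.2))
      ((1 - y)⁻¹ * log (1 - z)) := by
  have hy' : Summable (fun n : ℕ => ‖y ^ n‖) := by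
    simpa only [norm_pow] using summable_geometric_of_lt_one (norm_nonneg y) hy
  have hprod := summable_mul_of_summable_norm (R := ℂ) hy' (summable_norm_neg_pow_div hz)
  have hsum := (hasSum_geometric_of_norm_lt_one hy).mul (hasSum_neg_pow_div_log_one_sub hz) hprod
  exact hsum

theorem hasSum_pow_mul_neg_pow_mul_div {y z : ℂ} {a b : ℕ} (hb : b ≠ 0)
    (hw : ‖y ^ a * z ^ b‖ < 1) :
    HasSum (fun m : {m : ℕ // 0 < m} => y ^ (a * m) * -(z ^ (b * m) / ((b * m : ℕ) : ℂ)))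
      (1 / b * log (1 - y ^ a * z ^ b)) := by
  have hterm : ∀ m : {m : ℕ // 0 < m}, y ^ (a * m) * -(z ^ (b * m) / ((b * m : ℕ) : ℂ)) =
      1 / b * -((y ^ a * z ^ b) ^ (m : ℕ) / m) := by
    rintro ⟨m, hm⟩
    have hm : (m : ℂ) ≠ 0 := Nat.cast_ne_zero.mpr hm.ne'
    have hb : (b : ℂ) ≠ 0 := Nat.cast_ne_zero.mpr hb
    rw [pow_mul, pow_mul, mul_pow]
    push_cast
    field_simp
  simpa only [hterm] using (hasSum_neg_pow_div_log_one_sub hw).mul_left (1 / (b : ℂ))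

theorem norm_pow_mul_pow_lt_one {y z : ℂ} (hy : ‖y‖ ≤ 1) (hz : ‖z‖ < 1) (a : ℕ) {b : ℕ}
    (hb : b ≠ 0) : ‖y ^ a * z ^ b‖ < 1 := by
  rw [norm_mul, norm_pow, norm_pow]
  exact mul_lt_one_of_nonneg_of_lt_one_right (pow_le_one₀ (norm_nonneg y) hy) (by positivity)
    (pow_lt_one₀ (norm_nonneg z) hz hb)

theorem vpv_half_plane_log_identity (y z : ℂ) (hy : ‖y‖ < 1)
    (hz : ‖z‖ < 1) :
    ∑' p : {p : ℕ × ℕ // 0 < p.2 ∧ Nat.gcd p.1 p.2 = 1},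
        (1 / ((p : ℕ × ℕ).2 : ℂ)) * Complex.log (1 - y ^ (p : ℕ × ℕ).1 * z ^ (p : ℕ × ℕ).2) =
      (1 / (1 - y)) * Complex.log (1 - z) := by
  have hfiber : ∀ p : {p : ℕ × ℕ // 0 < p.2 ∧ Nat.gcd p.1 p.2 = 1},
      HasSum (fun m : {m : ℕ // 0 < m} =>
          y ^ (p.1.1 * m) * -(z ^ (p.1.2 * m) / ((p.1.2 * m : ℕ) : ℂ)))
        (1 / (p.1.2 : ℂ) * log (1 - y ^ p.1.1 * z ^ p.1.2)) := fun p =>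
    hasSum_pow_mul_neg_pow_mul_div p.2.1.ne' (norm_pow_mul_pow_lt_one hy.le hz _ p.2.1.ne')
  have htotal := coprimePairProdPosEquiv.hasSum_iff.mpr (hasSum_geometric_mul_neg_pow_div hy hz)
  rw [(htotal.prod_fiberwise hfiber).tsum_eq, one_div]
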